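/- Let δ_B, k_on, k_off be positive reals and consider the cubic Q(φ) = φ³ + (δ_B + k_on + k_off + 1)φ² + ((δ_B+1)(k_on+k_off) + δ_B)φ + δ_B(k_on+k_off). Then its Routh–Hurwitz quantity α₂α₁ - α₃α₀ equals ((δ_B+1)(k_on+k_off) + δ_B)(δ_B + k_on + k_off) + δ_B + k_on + k_off, which is strictly positive; hence all roots of Q have negative real part. -/
import Mathlib


theorem homogeneous_cubic_stable
    (δB kon koff : ℝ) (hδ : 0 < δB) (hon : 0 < kon) (hoff : 0 < koff) :
    -- Routh–Hurwitz quantity α₂α₁ - α₃α₀ for the cubic Q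
    ((δB + kon + koff + 1) * ((δB + 1) * (kon + koff) + δB)
        - 1 * (δB * (kon + koff))
      = ((δB + 1) * (kon + koff) + δB) * (δB + kon + koff) + δB + kon + koff) ∧
    (0 < ((δB + 1) * (kon + koff) + δB) * (δB + kon + koff) + δB + kon + koff) ∧
    (∀ φ : ℂ, φ ^ 3 + ((δB : ℂ) + kon + koff + 1) * φ ^ 2
        + (((δB : ℂ) + 1) * ((kon : ℂ) + koff) + δB) * φ
        + (δB : ℂ) * ((kon : ℂ) + koff) = 0 → φ.re < 0) := by
  refine ⟨by ring, by positivity, ?_⟩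
  intro φ hφ
  have hfac : (φ + δB) * ((φ + 1) * (φ + (kon + koff))) = 0 := by
    rw [← hφ]; ring
  rcases mul_eq_zero.1 hfac with h | h
  · have : φ = -(δB : ℂ) := by linear_combination h
    rw [this]; simp [hδ]
  · rcases mul_eq_zero.1 h with h | h
    · have : φ = -(1 : ℂ) := by linear_combination h
      rw [this]; norm_num
    · have : φ = -((kon : ℂ) + koff) := by linear_combination h
      rw [this]
      simp only [Complex.neg_re, Complex.add_re, Complex.ofReal_re]
      linarith
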